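/- If T is a rooted tree that does not consist only of the root, then the multiplicity of 1 as an eigenvalue of the ancestral matrix C(T) equals (the number of leaves of T) minus (the number of non-root vertices of T that are adjacent to at least one leaf). -/

import Mathlib

open Matrix

/-- A rooted tree on a finite vertex type `V`, encoded by its root and the
parent function: the root is its own parent, and iterating the parent function
from any vertex eventually reaches the root.  (These conditions force the graph
whose edges join each non-root vertex to its parent to be a tree.) -/
structure TreeOn (V : Type) [Fintype V] [DecidableEq V] where
  root : V
  parent : V → V
  parent_root : parent root = root
  reaches : ∀ v, ∃ k, parent^[k] v = root

namespace TreeOn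

variable {V : Type} [Fintype V] [DecidableEq V]

/-- `u` is a (weak) ancestor of `v`: some iterate of the parent function sends
`v` to `u`.  (Any ancestor is reached within `Fintype.card V` steps, so the
bound makes the predicate decidable without changing its meaning.) -/
def IsAncestor (T : TreeOn V) (u v : V) : Prop :=
  ∃ k, k ≤ Fintype.card V ∧ T.parent^[k] v = u

instance (T : TreeOn V) (u v : V) : Decidable (T.IsAncestor u v) := by
  have h : T.IsAncestor u v ↔ ∃ k ∈ Finset.range (Fintype.card V + 1), T.parent^[k] v = u := by
    simp [IsAncestor, Nat.lt_succ_iff]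
  rw [h]; infer_instance

/-- The level of a vertex: its distance to the root. -/
def level (T : TreeOn V) (v : V) : ℕ := Nat.find (T.reaches v)

/-- The ancestral level `ℓ(v ∨ w)`: the level of the lowest common ancestor
of `v` and `w`, i.e. the greatest level of a common ancestor. -/
def lcaLevel (T : TreeOn V) (v w : V) : ℕ :=
  (Finset.univ.filter fun u => T.IsAncestor u v ∧ T.IsAncestor u w).sup T.level

/-- A leaf is a vertex with no children. -/
def IsLeaf (T : TreeOn V) (v : V) : Prop := ∀ u, T.parent u = v → u = v

instance (T : TreeOn V) : DecidablePred T.IsLeaf := fun v =>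
  inferInstanceAs (Decidable (∀ u, T.parent u = v → u = v))

/-- The type of leaves of `T`. -/
abbrev Leaf (T : TreeOn V) := {v : V // T.IsLeaf v}

/-- The ancestral matrix `C(T)`, indexed by the leaves of `T`, whose
`(v, w)` entry is the ancestral level `ℓ(v ∨ w)`. -/
noncomputable def ancMatrix (T : TreeOn V) : Matrix T.Leaf T.Leaf ℝ :=
  Matrix.of fun v w => (T.lcaLevel v.1 w.1 : ℝ)

/-- The ancestral spectral radius `ρ_C(T)`: the largest eigenvalue of `C(T)`. -/
noncomputable def rhoC (T : TreeOn V) : ℝ :=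
  sSup {μ : ℝ | ∃ x : T.Leaf → ℝ, x ≠ 0 ∧ T.ancMatrix.mulVec x = μ • x}

/-- The underlying simple graph of the tree: each non-root vertex is joined
to its parent. -/
def graph (T : TreeOn V) : SimpleGraph V :=
  SimpleGraph.fromRel fun u v => T.parent u = v ∧ u ≠ v

/-- The number of children (outdegree) of a vertex. -/
def childCount (T : TreeOn V) (v : V) : ℕ :=
  (Finset.univ.filter fun u => T.parent u = v ∧ u ≠ v).card

end TreeOn


/-! Let `a_v` be the indicator vector of the non-root ancestors of `v`, so that
`ℓ(v ∨ w) = a_v ⬝ a_w`. A leaf `v` with parent `p(v)` has `a_v = e_v + a_{p(v)}`, and `e_v` is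
orthogonal to every `a_{p(w)}` because a leaf is an ancestor of no other vertex. Hence
`C(T) = 1 + N Nᵀ`, where the rows of `N` are the vectors `a_{p(v)}`, and the eigenspace of `1` is
the kernel of `N Nᵀ`, of dimension `#leaves - rank N`. The vectors `a_u` of the non-root vertices
are triangular with respect to the level, hence linearly independent, so `rank N` is the number
of non-root parents of leaves, i.e. of non-root vertices adjacent to a leaf. -/

namespace Matrix

theorem finrank_eigenspace_toLin'_one_add {n K : Type*} [Fintype n] [DecidableEq n] [Field K]
    (B : Matrix n n K) :
    Module.finrank K (Module.End.eigenspace (toLin' (1 + B)) 1) = Fintype.card n - B.rank := by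
  have hker : Module.End.eigenspace (toLin' (1 + B)) 1 = LinearMap.ker (toLin' B) := by
    rw [Module.End.eigenspace_def, one_smul, map_add, toLin'_one, ← Module.End.one_eq_id,
      add_sub_cancel_left]
  have := (toLin' B).finrank_range_add_finrank_ker
  rw [Module.finrank_fintype_fun_eq_card] at this
  rw [hker, rank, ← toLin'_apply']
  omega

end Matrix

namespace TreeOn

variable {V : Type} [Fintype V] [DecidableEq V] (T : TreeOn V)

lemma iterate_root (k : ℕ) : T.parent^[k] T.root = T.root :=
  Function.iterate_fixed T.parent_root k

lemma iterate_level (v : V) : T.parent^[T.level v] v = T.root :=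
  Nat.find_spec (T.reaches v)

lemma iterate_eq_root_of_level_le {v : V} {k : ℕ} (h : T.level v ≤ k) :
    T.parent^[k] v = T.root := by
  rw [← Nat.sub_add_cancel h, Function.iterate_add_apply, T.iterate_level, T.iterate_root]

lemma level_lt_card (v : V) : T.level v < Fintype.card V := by
  suffices Function.Injective fun k : Fin (T.level v + 1) => T.parent^[k] v by
    simpa using Fintype.card_le_of_injective _ this
  -- a repetition `parent^[i] v = parent^[j] v` with `i < j ≤ level v` reaches the root too early
  have key : ∀ i j : ℕ, i < j → j ≤ T.level v → T.parent^[i] v ≠ T.parent^[j] v := by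
    intro i j hij hj heq
    have : T.parent^[T.level v - j + i] v = T.root := by
      rw [Function.iterate_add_apply, heq, ← Function.iterate_add_apply, Nat.sub_add_cancel hj,
        T.iterate_level]
    have : T.level v ≤ _ := Nat.find_min' (T.reaches v) this
    omega
  intro i j hij
  rcases lt_trichotomy (i : ℕ) j with h | h | h
  · exact absurd hij (key _ _ h (by omega))
  · exact Fin.ext h
  · exact absurd hij.symm (key _ _ h (by omega))

lemma isAncestor_iff {u v : V} : T.IsAncestor u v ↔ ∃ k, T.parent^[k] v = u := by
  refine ⟨fun ⟨k, _, hk⟩ => ⟨k, hk⟩, fun ⟨k, hk⟩ => ?_⟩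
  by_cases h : k ≤ T.level v
  · exact ⟨k, h.trans (T.level_lt_card v).le, hk⟩
  · refine ⟨T.level v, (T.level_lt_card v).le, ?_⟩
    rw [T.iterate_level, ← hk, T.iterate_eq_root_of_level_le (by omega)]

lemma level_eq_zero_iff {v : V} : T.level v = 0 ↔ v = T.root := by
  simp [level, Nat.find_eq_zero]

lemma level_parent {v : V} (hv : v ≠ T.root) : T.level (T.parent v) + 1 = T.level v := by
  have h0 : T.level v ≠ 0 := mt T.level_eq_zero_iff.1 hv
  apply le_antisymm
  · suffices T.level (T.parent v) ≤ T.level v - 1 by omega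
    refine Nat.find_min' _ ?_
    rw [← Function.iterate_succ_apply, Nat.succ_eq_add_one, Nat.sub_add_cancel (by omega),
      T.iterate_level]
  · exact Nat.find_min' _ (by rw [Function.iterate_succ_apply, T.iterate_level])

lemma isAncestor_refl (v : V) : T.IsAncestor v v :=
  T.isAncestor_iff.2 ⟨0, rfl⟩

lemma isAncestor_root (v : V) : T.IsAncestor T.root v :=
  T.isAncestor_iff.2 ⟨_, T.iterate_level v⟩

lemma eq_root_of_isAncestor_root {u : V} (h : T.IsAncestor u T.root) : u = T.root := by
  obtain ⟨k, hk⟩ := T.isAncestor_iff.1 h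
  rw [← hk, T.iterate_root]

lemma isAncestor_trans {u v w : V} (h₁ : T.IsAncestor u v) (h₂ : T.IsAncestor v w) :
    T.IsAncestor u w := by
  obtain ⟨k₁, rfl⟩ := T.isAncestor_iff.1 h₁
  obtain ⟨k₂, rfl⟩ := T.isAncestor_iff.1 h₂
  exact T.isAncestor_iff.2 ⟨k₁ + k₂, Function.iterate_add_apply _ _ _ _⟩

lemma isAncestor_iff_eq_or_isAncestor_parent {u v : V} :
    T.IsAncestor u v ↔ u = v ∨ T.IsAncestor u (T.parent v) := by
  simp only [isAncestor_iff]
  constructor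
  · rintro ⟨_ | k, rfl⟩
    · exact Or.inl rfl
    · exact Or.inr ⟨k, (Function.iterate_succ_apply _ _ _).symm⟩
  · rintro (rfl | ⟨k, rfl⟩)
    · exact ⟨0, rfl⟩
    · exact ⟨k + 1, Function.iterate_succ_apply _ _ _⟩

lemma not_isAncestor_parent_self {v : V} (hv : v ≠ T.root) : ¬ T.IsAncestor v (T.parent v) := by
  intro h
  obtain ⟨k, hk⟩ := T.isAncestor_iff.1 h
  -- `v` would be a periodic point of `parent`, but all orbits end at the root
  have hper : Function.IsPeriodicPt T.parent (k + 1) v := by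
    rwa [Function.IsPeriodicPt, Function.IsFixedPt, Function.iterate_succ_apply]
  apply hv
  rw [← (hper.mul_const (T.level v)).eq, T.iterate_eq_root_of_level_le]
  exact Nat.le_mul_of_pos_left _ k.succ_pos

lemma eq_root_of_parent_eq_self {v : V} (h : T.parent v = v) : v = T.root := by
  by_contra hv
  exact T.not_isAncestor_parent_self hv (by rw [h]; exact T.isAncestor_refl v)

lemma eq_of_isLeaf_of_isAncestor {v z : V} (hv : T.IsLeaf v) (h : T.IsAncestor v z) : z = v := by
  obtain ⟨k, hk⟩ := T.isAncestor_iff.1 h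
  clear h
  induction k with
  | zero => exact hk
  | succ k ih => exact ih (hv _ (by rwa [Function.iterate_succ_apply'] at hk))

def nonrootAncestors (v : V) : Finset V :=
  Finset.univ.filter fun u => u ≠ T.root ∧ T.IsAncestor u v

lemma nonrootAncestors_root : T.nonrootAncestors T.root = ∅ := by
  ext u
  simp only [nonrootAncestors, Finset.mem_filter, Finset.mem_univ, true_and,
    Finset.notMem_empty, iff_false, not_and]
  exact fun hu h => hu (T.eq_root_of_isAncestor_root h)

lemma nonrootAncestors_of_ne_root {v : V} (hv : v ≠ T.root) :
    T.nonrootAncestors v = insert v (T.nonrootAncestors (T.parent v)) := by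
  ext u
  simp only [nonrootAncestors, Finset.mem_insert, Finset.mem_filter, Finset.mem_univ, true_and,
    T.isAncestor_iff_eq_or_isAncestor_parent (v := v)]
  constructor
  · rintro ⟨hu, rfl | h⟩
    · exact Or.inl rfl
    · exact Or.inr ⟨hu, h⟩
  · rintro (rfl | ⟨hu, h⟩)
    · exact ⟨hv, Or.inl rfl⟩
    · exact ⟨hu, Or.inr h⟩

lemma self_notMem_nonrootAncestors_parent (v : V) : v ∉ T.nonrootAncestors (T.parent v) := by
  simp only [nonrootAncestors, Finset.mem_filter, Finset.mem_univ, true_and, not_and]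
  exact T.not_isAncestor_parent_self

lemma card_nonrootAncestors (v : V) : (T.nonrootAncestors v).card = T.level v := by
  induction h : T.level v generalizing v with
  | zero => rw [T.level_eq_zero_iff.1 h, T.nonrootAncestors_root, Finset.card_empty]
  | succ n ih =>
    have hv : v ≠ T.root := by
      rintro rfl
      rw [T.level_eq_zero_iff.2 rfl] at h
      omega
    rw [T.nonrootAncestors_of_ne_root hv,
      Finset.card_insert_of_notMem (T.self_notMem_nonrootAncestors_parent v), ih]
    have := T.level_parent hv
    omega

lemma nonrootAncestors_mono {u v : V} (h : T.IsAncestor u v) :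
    T.nonrootAncestors u ⊆ T.nonrootAncestors v := by
  intro w
  simp only [nonrootAncestors, Finset.mem_filter, Finset.mem_univ, true_and]
  exact fun ⟨hw, hwu⟩ => ⟨hw, T.isAncestor_trans hwu h⟩

lemma level_le_of_isAncestor {u v : V} (h : T.IsAncestor u v) : T.level u ≤ T.level v := by
  simpa only [card_nonrootAncestors] using Finset.card_le_card (T.nonrootAncestors_mono h)

lemma level_lt_of_isAncestor {u v : V} (h : T.IsAncestor u v) (huv : u ≠ v) :
    T.level u < T.level v := by
  have hu : T.IsAncestor u (T.parent v) :=
    (T.isAncestor_iff_eq_or_isAncestor_parent.1 h).resolve_left huv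
  have hv : v ≠ T.root := fun hv => huv (by subst hv; exact T.eq_root_of_isAncestor_root h)
  have := T.level_parent hv
  have := T.level_le_of_isAncestor hu
  omega

lemma lcaLevel_of_isAncestor {u v : V} (h : T.IsAncestor u v) : T.lcaLevel u v = T.level u :=
  le_antisymm
    (Finset.sup_le fun _ hw => T.level_le_of_isAncestor (Finset.mem_filter.1 hw).2.1)
    (Finset.le_sup (by simp [T.isAncestor_refl, h]))

lemma lcaLevel_eq_card_inter (x y : V) :
    T.lcaLevel x y = (T.nonrootAncestors x ∩ T.nonrootAncestors y).card := by
  by_cases hxy : T.IsAncestor x y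
  · rw [T.lcaLevel_of_isAncestor hxy, Finset.inter_eq_left.2 (T.nonrootAncestors_mono hxy),
      card_nonrootAncestors]
  have hx : x ≠ T.root := by rintro rfl; exact hxy (T.isAncestor_root y)
  -- passing from `x` to its parent only loses `x` itself, which is not a common ancestor
  have key : ∀ u, T.IsAncestor u y → (T.IsAncestor u x ↔ T.IsAncestor u (T.parent x)) := by
    intro u hu
    rw [T.isAncestor_iff_eq_or_isAncestor_parent, or_iff_right]
    rintro rfl
    exact hxy hu
  have hlca : T.lcaLevel x y = T.lcaLevel (T.parent x) y := by
    unfold lcaLevel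
    congr 1
    ext u
    simp only [Finset.mem_filter, Finset.mem_univ, true_and]
    exact ⟨fun ⟨h₁, h₂⟩ => ⟨(key u h₂).1 h₁, h₂⟩,
      fun ⟨h₁, h₂⟩ => ⟨(key u h₂).2 h₁, h₂⟩⟩
  have hinter : T.nonrootAncestors x ∩ T.nonrootAncestors y =
      T.nonrootAncestors (T.parent x) ∩ T.nonrootAncestors y := by
    ext u
    simp only [nonrootAncestors, Finset.mem_inter, Finset.mem_filter, Finset.mem_univ, true_and]
    exact ⟨fun ⟨⟨hu, h₁⟩, h₂⟩ => ⟨⟨hu, (key u h₂.2).1 h₁⟩, h₂⟩,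
      fun ⟨⟨hu, h₁⟩, h₂⟩ => ⟨⟨hu, (key u h₂.2).2 h₁⟩, h₂⟩⟩
  rw [hlca, hinter, lcaLevel_eq_card_inter (T.parent x) y]
termination_by T.level x
decreasing_by have := T.level_parent hx; omega

noncomputable def ancVec (v : V) : V → ℝ :=
  fun w => if w ∈ T.nonrootAncestors v then 1 else 0

lemma lcaLevel_eq_dotProduct (x y : V) :
    (T.lcaLevel x y : ℝ) = T.ancVec x ⬝ᵥ T.ancVec y := by
  simp only [dotProduct, ancVec, ite_zero_mul_ite_zero, one_mul, Finset.sum_boole,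
    lcaLevel_eq_card_inter, ← Finset.mem_inter, Finset.filter_mem_eq_inter, Finset.univ_inter]

lemma ancVec_root : T.ancVec T.root = 0 := by
  ext w
  simp [ancVec, nonrootAncestors_root]

lemma ancVec_of_ne_root {v : V} (hv : v ≠ T.root) :
    T.ancVec v = Pi.single v 1 + T.ancVec (T.parent v) := by
  ext w
  have := T.self_notMem_nonrootAncestors_parent v
  by_cases hw : w = v
  · subst hw
    simp [ancVec, T.nonrootAncestors_of_ne_root hv, this]
  · simp [ancVec, T.nonrootAncestors_of_ne_root hv, hw]

lemma ancVec_parent_apply_of_isLeaf {z : V} (hz : T.IsLeaf z) (v : V) :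
    T.ancVec (T.parent v) z = 0 := by
  simp only [ancVec, nonrootAncestors, Finset.mem_filter, Finset.mem_univ, true_and,
    ite_eq_right_iff, one_ne_zero, imp_false, not_and]
  intro hz_root hanc
  have hpv : T.parent v = z := T.eq_of_isLeaf_of_isAncestor hz hanc
  obtain rfl : v = z := hz v hpv
  exact hz_root (T.eq_root_of_parent_eq_self hpv)

lemma linearIndependent_ancVec :
    LinearIndependent ℝ fun u : {u : V // u ≠ T.root} => T.ancVec u := by
  rw [Fintype.linearIndependent_iff]
  intro g hg
  by_contra! hne
  obtain ⟨u₀, hu₀, hmax⟩ := Finset.exists_max_image (Finset.univ.filter fun u => g u ≠ 0)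
    (fun u => T.level u.1) (by simpa [Finset.filter_nonempty_iff] using hne)
  have hu₀ : g u₀ ≠ 0 := (Finset.mem_filter.1 hu₀).2
  -- at `u₀`, only the vectors of vertices below `u₀` contribute, and `u₀` has maximal level
  have := congrFun hg u₀
  rw [Finset.sum_apply, Finset.sum_eq_single u₀] at this
  · simp [ancVec, nonrootAncestors, u₀.2, T.isAncestor_refl, hu₀] at this
  · intro u _ hu
    by_cases hgu : g u = 0
    · simp [hgu]
    have : ¬ T.IsAncestor u₀ u := fun h =>
      (T.level_lt_of_isAncestor h (fun h' => hu (Subtype.ext h'.symm))).not_ge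
        (hmax u (by simp [hgu]))
    simp [ancVec, nonrootAncestors, this]
  · simp

lemma ne_root_of_isLeaf (hT : ∃ v, v ≠ T.root) {w : V} (hw : T.IsLeaf w) : w ≠ T.root := by
  obtain ⟨v, hv⟩ := hT
  rintro rfl
  exact hv (T.eq_of_isLeaf_of_isAncestor hw (T.isAncestor_root v))

noncomputable def parentAncMatrix : Matrix T.Leaf V ℝ :=
  Matrix.of fun v => T.ancVec (T.parent v)

lemma ancMatrix_eq_one_add (hT : ∃ v, v ≠ T.root) :
    T.ancMatrix = 1 + T.parentAncMatrix * T.parentAncMatrixᵀ := by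
  ext v z
  have hv := T.ancVec_of_ne_root (T.ne_root_of_isLeaf hT v.2)
  have hz := T.ancVec_of_ne_root (T.ne_root_of_isLeaf hT z.2)
  calc (T.lcaLevel v z : ℝ)
      = (Pi.single v.1 1 + T.ancVec (T.parent v)) ⬝ᵥ
          (Pi.single z.1 1 + T.ancVec (T.parent z)) := by
        rw [lcaLevel_eq_dotProduct, ← hv, ← hz]
    _ = (Pi.single v.1 1 : V → ℝ) z + T.ancVec (T.parent v) ⬝ᵥ T.ancVec (T.parent z) := by
        simp only [add_dotProduct, dotProduct_add, single_dotProduct, dotProduct_single,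
          Pi.add_apply, T.ancVec_parent_apply_of_isLeaf v.2, T.ancVec_parent_apply_of_isLeaf z.2]
        ring
    _ = _ := by
        simp [parentAncMatrix, Matrix.mul_apply, dotProduct, Matrix.one_apply, Pi.single_apply,
          Subtype.ext_iff, eq_comm]

def leafParents : Finset V :=
  Finset.univ.filter fun u => u ≠ T.root ∧ ∃ w, T.IsLeaf w ∧ T.parent w = u

lemma mem_leafParents {u : V} :
    u ∈ T.leafParents ↔ u ≠ T.root ∧ ∃ w, T.IsLeaf w ∧ T.parent w = u := by
  simp [leafParents]

lemma rank_parentAncMatrix : T.parentAncMatrix.rank = T.leafParents.card := by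
  have hspan : Submodule.span ℝ (Set.range T.parentAncMatrix.row) =
      Submodule.span ℝ (Set.range fun u : T.leafParents => T.ancVec u) := by
    apply le_antisymm
    · rw [Submodule.span_le]
      rintro _ ⟨v, rfl⟩
      by_cases hv : T.parent v = T.root
      · change T.ancVec (T.parent v) ∈ _
        rw [hv, ancVec_root]
        exact Submodule.zero_mem _
      · exact Submodule.subset_span
          ⟨⟨T.parent v, T.mem_leafParents.2 ⟨hv, v, v.2, rfl⟩⟩, rfl⟩
    · refine Submodule.span_mono ?_
      rintro _ ⟨u, rfl⟩
      obtain ⟨-, w, hw, hwu⟩ := T.mem_leafParents.1 u.2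
      exact ⟨⟨w, hw⟩, congrArg T.ancVec hwu⟩
  have hli : LinearIndependent ℝ fun u : T.leafParents => T.ancVec u :=
    T.linearIndependent_ancVec.comp
      (fun u : T.leafParents => ⟨u.1, (T.mem_leafParents.1 u.2).1⟩)
      fun _ _ h => Subtype.ext (Subtype.mk.inj h)
  rw [Matrix.rank_eq_finrank_span_row, hspan, finrank_span_eq_card hli, Fintype.card_coe]

lemma graph_adj_of_isLeaf {u w : V} (hw : T.IsLeaf w) :
    T.graph.Adj u w ↔ T.parent w = u ∧ w ≠ T.root := by
  simp only [graph, SimpleGraph.fromRel_adj]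
  constructor
  · rintro ⟨huw, ⟨hu, -⟩ | ⟨hw', -⟩⟩
    · exact absurd (hw u hu) huw
    · refine ⟨hw', ?_⟩
      rintro rfl
      exact huw (by rw [← hw', T.parent_root])
  · rintro ⟨rfl, hw'⟩
    have : T.parent w ≠ w := fun h => hw' (T.eq_root_of_parent_eq_self h)
    exact ⟨this, Or.inr ⟨rfl, this.symm⟩⟩

open Classical in
lemma filter_adj_isLeaf_eq_leafParents :
    (Finset.univ.filter fun u : V => u ≠ T.root ∧ ∃ w, T.IsLeaf w ∧ T.graph.Adj u w) =
      T.leafParents := by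
  ext u
  simp only [mem_leafParents, Finset.mem_filter, Finset.mem_univ, true_and]
  refine and_congr_right fun hu => exists_congr fun w => and_congr_right fun hw => ?_
  rw [T.graph_adj_of_isLeaf hw]
  exact ⟨And.left, fun h => ⟨h, by rintro rfl; exact hu (by rw [← h, T.parent_root])⟩⟩

end TreeOn

open Classical in
/-- If a rooted tree `T` does not consist only of the root,
then the multiplicity of `1` as an eigenvalue of the ancestral matrix `C(T)`
(i.e. the dimension of the eigenspace of `1`, which coincides with the
algebraic multiplicity since `C(T)` is real symmetric) equals the number of
leaves of `T` minus the number of non-root vertices of `T` adjacent to at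
least one leaf. -/
theorem multiplicity_one_eigenvalue_ancMatrix
    {V : Type} [Fintype V] [DecidableEq V] (T : TreeOn V)
    (hT : ∃ v, v ≠ T.root) :
    Module.finrank ℝ
        (Module.End.eigenspace
          (Matrix.toLin' T.ancMatrix : Module.End ℝ (T.Leaf → ℝ)) 1) =
      Fintype.card T.Leaf -
        (Finset.univ.filter fun u : V =>
          u ≠ T.root ∧ ∃ w, T.IsLeaf w ∧ T.graph.Adj u w).card := by
  rw [T.ancMatrix_eq_one_add hT, Matrix.finrank_eigenspace_toLin'_one_add,
    Matrix.rank_self_mul_transpose, T.rank_parentAncMatrix, T.filter_adj_isLeaf_eq_leafParents]
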